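/- arXiv:1808.00602 — 5 statements merged into one kernel-verified Lean document; each statement's English description precedes it below -/
import Mathlib

section
/- For partitions μ ⊆ λ with μ ≠ λ and integers f, g, if T = T_{λ/μ}(f,g) is the threshold number, then W(λ/μ) ≥ g - T, where W(λ/μ) = max_i(λ_i - μ_i) is the width. -/
/-!
Shifting by `t = g - W(λ/μ)` makes `ν''(λ,μ,g-t)` equal to `λ` itself, because `μ_i + W ≥ λ_i`
for every row. Since `ν'(λ,μ,n)` is always contained in `λ`, this `t` lies in the threshold set,
so the greatest element `T` is at least `g - W(λ/μ)`.
-/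

/-- A partition: a weakly decreasing sequence of naturals, eventually zero
(finite support). `parts i` is the (i+1)-st part (0-indexed). -/
structure NatPartition where
  parts : ℕ →₀ ℕ
  antitone : ∀ ⦃i j : ℕ⦄, i ≤ j → parts j ≤ parts i

namespace NatPartition

/-- The weight `|λ|` of a partition: the sum of its parts. -/
def weight (l : NatPartition) : ℕ := l.parts.sum fun _ n => n

/-- The (i+1)-st part of the conjugate partition: the number of indices `j`
with `parts j ≥ i + 1`. -/
def conj (l : NatPartition) (i : ℕ) : ℕ :=
  (l.parts.support.filter fun j => i + 1 ≤ l.parts j).card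

end NatPartition

open NatPartition

/-- The (i+1)-st part of `ν''(λ,μ,n)`, namely `min (λ_i, max (μ_i, μ_i + n))`. -/
def nuppParts (lam mu : NatPartition) (n : ℤ) (i : ℕ) : ℕ :=
  min (lam.parts i) ((max ((mu.parts i : ℤ)) ((mu.parts i : ℤ) + n)).toNat)

/-- The weight `|ν''(λ,μ,n)|`. -/
def nuppWeight (lam mu : NatPartition) (n : ℤ) : ℕ :=
  ∑ i ∈ lam.parts.support, nuppParts lam mu n i

/-- The (i+1)-st part of the conjugate of `ν'(λ,μ,n)`, namely
`max (μ̃_i, min (λ̃_i, λ̃_i - n))`. -/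
def nupConj (lam mu : NatPartition) (n : ℤ) (i : ℕ) : ℕ :=
  (max ((mu.conj i : ℤ)) (min ((lam.conj i : ℤ)) ((lam.conj i : ℤ) - n))).toNat

/-- The (i+1)-st part of `ν'(λ,μ,n)`, obtained by conjugating back. -/
def nupParts (lam mu : NatPartition) (n : ℤ) (i : ℕ) : ℕ :=
  ((Finset.range (lam.parts 0)).filter fun t => i + 1 ≤ nupConj lam mu n t).card

/-- The weight `|ν'(λ,μ,n)|` (computed as the sum of the parts of its conjugate). -/
def nupWeight (lam mu : NatPartition) (n : ℤ) : ℕ :=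
  ∑ i ∈ Finset.range (lam.parts 0), nupConj lam mu n i

/-- The width `W(λ/μ) = max_i (λ_i - μ_i)`. -/
def skewWidth (lam mu : NatPartition) : ℕ :=
  lam.parts.support.sup fun i => lam.parts i - mu.parts i

/-- The height `H(λ/μ) = max_i (λ̃_i - μ̃_i)`. -/
def skewHeight (lam mu : NatPartition) : ℕ :=
  (Finset.range (lam.parts 0)).sup fun i => lam.conj i - mu.conj i

/-- Containment `ν'(λ,μ,a) ⊆ ν''(λ,μ,b)` (partwise inequality). -/
def nupSubNupp (lam mu : NatPartition) (a b : ℤ) : Prop :=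
  ∀ i, nupParts lam mu a i ≤ nuppParts lam mu b i

/-- The set of which the threshold number `T_{λ/μ}(f,g)` is the greatest element. -/
def threshSet (lam mu : NatPartition) (f g : ℤ) : Set ℤ :=
  {t : ℤ | nupSubNupp lam mu (f - t) (g - t)}

namespace NatPartition

lemma add_one_le_conj_iff (lam : NatPartition) (i t : ℕ) :
    i + 1 ≤ lam.conj t ↔ t + 1 ≤ lam.parts i := by
  constructor
  · intro h
    by_contra! hc
    have hss : (lam.parts.support.filter fun j => t + 1 ≤ lam.parts j) ⊆ Finset.range i := by
      intro j hj
      rw [Finset.mem_filter] at hj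
      rw [Finset.mem_range]
      by_contra! hij
      have := lam.antitone hij
      omega
    have hcard := (Finset.card_le_card hss).trans_eq (Finset.card_range i)
    rw [conj] at h
    omega
  · intro h
    have hss : Finset.range (i + 1) ⊆
        lam.parts.support.filter fun j => t + 1 ≤ lam.parts j := by
      intro j hj
      rw [Finset.mem_range] at hj
      have := lam.antitone (Nat.le_of_lt_succ hj)
      simp only [Finset.mem_filter, Finsupp.mem_support_iff]
      omega
    calc i + 1 = (Finset.range (i + 1)).card := (Finset.card_range _).symm
      _ ≤ lam.conj t := Finset.card_le_card hss

lemma conj_mono {lam mu : NatPartition} (hsub : ∀ i, mu.parts i ≤ lam.parts i) (t : ℕ) :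
    mu.conj t ≤ lam.conj t := by
  apply Finset.card_le_card
  intro j hj
  simp only [Finset.mem_filter, Finsupp.mem_support_iff] at hj ⊢
  have := hsub j
  omega

lemma card_filter_add_one_le_conj (lam : NatPartition) (i : ℕ) :
    ((Finset.range (lam.parts 0)).filter fun t => i + 1 ≤ lam.conj t).card = lam.parts i := by
  have h0 := lam.antitone (Nat.zero_le i)
  rw [← Finset.card_range (lam.parts i)]
  congr 1
  ext t
  simp only [Finset.mem_filter, Finset.mem_range, add_one_le_conj_iff]
  omega

lemma sub_le_skewWidth (lam mu : NatPartition) (i : ℕ) :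
    lam.parts i - mu.parts i ≤ skewWidth lam mu := by
  by_cases hi : i ∈ lam.parts.support
  · exact Finset.le_sup (f := fun j => lam.parts j - mu.parts j) hi
  · simp [Finsupp.notMem_support_iff.mp hi]

end NatPartition

open NatPartition

lemma nupConj_le_conj {lam mu : NatPartition} (hsub : ∀ i, mu.parts i ≤ lam.parts i)
    (n : ℤ) (t : ℕ) : nupConj lam mu n t ≤ lam.conj t := by
  rw [nupConj, Int.toNat_le]
  exact max_le (by exact_mod_cast conj_mono hsub t) (min_le_left _ _)

lemma nupParts_le {lam mu : NatPartition} (hsub : ∀ i, mu.parts i ≤ lam.parts i)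
    (n : ℤ) (i : ℕ) : nupParts lam mu n i ≤ lam.parts i := by
  rw [← card_filter_add_one_le_conj lam i]
  apply Finset.card_le_card
  intro t ht
  simp only [Finset.mem_filter] at ht ⊢
  exact ⟨ht.1, ht.2.trans (nupConj_le_conj hsub n t)⟩

lemma nuppParts_eq_of_sub_le {lam mu : NatPartition} {n : ℤ} {i : ℕ}
    (hn : ((lam.parts i - mu.parts i : ℕ) : ℤ) ≤ n) : nuppParts lam mu n i = lam.parts i := by
  unfold nuppParts
  omega

lemma sub_skewWidth_mem_threshSet {lam mu : NatPartition} (hsub : ∀ i, mu.parts i ≤ lam.parts i)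
    (f g : ℤ) : g - skewWidth lam mu ∈ threshSet lam mu f g := by
  intro i
  rw [nuppParts_eq_of_sub_le (by simpa using sub_le_skewWidth lam mu i)]
  exact nupParts_le hsub _ i

theorem stmt9_general (lam mu : NatPartition) (hsub : ∀ i, mu.parts i ≤ lam.parts i)
    (f g T : ℤ) (hT : IsGreatest (threshSet lam mu f g) T) :
    g - T ≤ (skewWidth lam mu : ℤ) := by
  have := hT.2 (sub_skewWidth_mem_threshSet hsub f g)
  omega

/-- For `μ ⊊ λ`, the threshold number `T = T_{λ/μ}(f,g)` satisfies `W(λ/μ) ≥ g - T`. -/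
theorem stmt9 (lam mu : NatPartition) (hsub : ∀ i, mu.parts i ≤ lam.parts i)
    (hne : mu.parts ≠ lam.parts)
    (f g T : ℤ) (hT : IsGreatest (threshSet lam mu f g) T) :
    g - T ≤ (skewWidth lam mu : ℤ) :=
  stmt9_general lam mu hsub f g T hT
end

section
/- For partitions μ ⊆ λ and an integer f, either T_{λ/μ}(f,0) < 0 or T_{λ/μ}(f,0) = f - H(λ/μ) ≥ 0, where H(λ/μ) is the height of λ/μ. -/
open NatPartition

/-! For `t ≥ 0` the partition `ν''(λ,μ,-t)` is just `μ`, and after conjugating,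
`ν'(λ,μ,f-t) ⊆ μ` says that every column of `λ/μ` has at most `f - t` cells. Hence the
nonnegative elements of the threshold set are exactly the `t` with `0 ≤ t ≤ f - H(λ/μ)`
(all `t ≥ 0` when `H(λ/μ) = 0`, and then there is no greatest element). -/

lemma Finset.lt_card_iff_mem_of_isLowerSet {s : Finset ℕ} (hs : IsLowerSet (s : Set ℕ))
    (i : ℕ) : i < s.card ↔ i ∈ s := by
  constructor
  · intro h
    by_contra hi
    have hsub : s ⊆ Finset.range i := fun j hj =>
      Finset.mem_range.2 (lt_of_not_ge fun hij => hi (hs hij hj))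
    simpa using (Finset.card_le_card hsub).trans_lt' h
  · intro h
    have hsub : Finset.range (i + 1) ⊆ s := fun j hj =>
      hs (Nat.lt_succ_iff.1 (Finset.mem_range.1 hj)) h
    simpa using Finset.card_le_card hsub

namespace NatPartition

variable (p : NatPartition)

theorem lt_conj_iff (i j : ℕ) : i < p.conj j ↔ j < p.parts i := by
  unfold conj
  rw [Finset.lt_card_iff_mem_of_isLowerSet]
  · simp only [Finset.mem_filter, Finsupp.mem_support_iff]
    exact ⟨fun h => h.2, fun h => ⟨by omega, h⟩⟩
  · intro a b hba ha
    simp only [Finset.coe_filter, Finsupp.mem_support_iff, Set.mem_ofPred_eq] at *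
    have := p.antitone hba
    exact ⟨by omega, by omega⟩

theorem conj_antitone {i j : ℕ} (h : i ≤ j) : p.conj j ≤ p.conj i := by
  by_contra! hlt
  have := (p.lt_conj_iff (p.conj i) j).1 hlt
  exact (Nat.lt_irrefl _) ((p.lt_conj_iff _ i).2 (by omega))

theorem conj_eq_zero_of_le {j : ℕ} (h : p.parts 0 ≤ j) : p.conj j = 0 := by
  by_contra! h0
  have := (p.lt_conj_iff 0 j).1 (Nat.pos_of_ne_zero h0)
  omega

theorem conj_le_conj {mu : NatPartition} (hsub : ∀ i, mu.parts i ≤ p.parts i) (j : ℕ) :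
    mu.conj j ≤ p.conj j := by
  by_contra! hlt
  have := (mu.lt_conj_iff (p.conj j) j).1 hlt
  exact (Nat.lt_irrefl _) ((p.lt_conj_iff _ j).2 (this.trans_le (hsub _)))

end NatPartition

section Skew

variable {lam mu : NatPartition}

theorem skewHeight_le_iff (n : ℕ) :
    skewHeight lam mu ≤ n ↔ ∀ j, lam.conj j - mu.conj j ≤ n := by
  rw [skewHeight, Finset.sup_le_iff]
  refine ⟨fun h j => ?_, fun h j _ => h j⟩
  rcases lt_or_ge j (lam.parts 0) with hj | hj
  · exact h j (Finset.mem_range.2 hj)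
  · simp [lam.conj_eq_zero_of_le hj]

variable (hsub : ∀ i, mu.parts i ≤ lam.parts i)
include hsub

theorem nupConj_eq_max (a : ℤ) (j : ℕ) :
    nupConj lam mu a j = max (mu.conj j) (lam.conj j - a.toNat) := by
  have := lam.conj_le_conj hsub j
  unfold nupConj
  omega

theorem lt_nupParts_iff (a : ℤ) (i j : ℕ) :
    j < nupParts lam mu a i ↔ i < nupConj lam mu a j := by
  unfold nupParts
  rw [Finset.lt_card_iff_mem_of_isLowerSet]
  · simp only [Finset.mem_filter, Finset.mem_range, nupConj_eq_max hsub]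
    refine ⟨fun h => h.2, fun h => ⟨?_, h⟩⟩
    by_contra! hj
    have := lam.conj_eq_zero_of_le hj
    have := lam.conj_le_conj hsub j
    omega
  · intro x y hyx hx
    simp only [Finset.coe_filter, Finset.mem_range, Set.mem_ofPred_eq,
      nupConj_eq_max hsub] at *
    have := mu.conj_antitone hyx
    have := lam.conj_antitone hyx
    exact ⟨by omega, by omega⟩

theorem nupParts_le_iff_nupConj_le (a : ℤ) :
    (∀ i, nupParts lam mu a i ≤ mu.parts i) ↔ ∀ j, nupConj lam mu a j ≤ mu.conj j := by
  constructor
  · intro h j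
    by_contra! hlt
    have := (lt_nupParts_iff hsub a _ j).2 hlt
    exact (Nat.lt_irrefl _) ((mu.lt_conj_iff _ j).2 (this.trans_le (h _)))
  · intro h i
    by_contra! hlt
    have := (lt_nupParts_iff hsub a i _).1 hlt
    exact (Nat.lt_irrefl _) ((mu.lt_conj_iff i _).1 (this.trans_le (h _)))

theorem nuppParts_of_nonpos {n : ℤ} (hn : n ≤ 0) (i : ℕ) : nuppParts lam mu n i = mu.parts i := by
  have := hsub i
  unfold nuppParts
  omega

theorem mem_threshSet_zero_iff (f : ℤ) {t : ℤ} (ht : 0 ≤ t) :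
    t ∈ threshSet lam mu f 0 ↔ skewHeight lam mu ≤ (f - t).toNat := by
  simp only [threshSet, Set.mem_ofPred_eq, nupSubNupp,
    nuppParts_of_nonpos hsub (show 0 - t ≤ 0 by omega)]
  rw [nupParts_le_iff_nupConj_le hsub, skewHeight_le_iff]
  refine forall_congr' fun j => ?_
  rw [nupConj_eq_max hsub]
  omega

end Skew

/-- Either `T_{λ/μ}(f,0) < 0` or `T_{λ/μ}(f,0) = f - H(λ/μ) ≥ 0`. -/
theorem stmt11 (lam mu : NatPartition) (hsub : ∀ i, mu.parts i ≤ lam.parts i)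
    (f T : ℤ) (hT : IsGreatest (threshSet lam mu f 0) T) :
    T < 0 ∨ (T = f - (skewHeight lam mu : ℤ) ∧ 0 ≤ T) := by
  rcases lt_or_ge T 0 with hneg | hT0
  · exact Or.inl hneg
  right
  have hT_mem := (mem_threshSet_zero_iff hsub f hT0).1 hT.1
  have hH : skewHeight lam mu ≠ 0 := by
    intro hH
    have hsucc : T + 1 ∈ threshSet lam mu f 0 :=
      (mem_threshSet_zero_iff hsub f (by omega)).2 (by omega)
    have := hT.2 hsucc
    omega
  have hmax : f - (skewHeight lam mu : ℤ) ∈ threshSet lam mu f 0 :=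
    (mem_threshSet_zero_iff hsub f (by omega)).2 (by omega)
  have := hT.2 hmax
  omega
end

section
/- Let R be a commutative ring, let φ : F → G be an R-linear map of finite free modules with rank F = f < rank G, and let ε : ∧^{f+1}G* ⊗ ∧^f F → G* be the map defined by ε(e*_I ⊗ b) = Σ_{J ⊂ I, |J| = f} sgn(J ⊂ I) det(φ_J) e*_{I∖J}, where φ_J denotes the submatrix of φ with columns indexed by J. Then the composition φ* ∘ ε = 0, i.e., for every x ∈ ∧^{f+1}G* ⊗ ∧^f F, the functional ε(x) vanishes on the image of φ. -/
/-!
Let `σ` enumerate `I` increasingly. The `(f+1) × (f+1)` matrix whose first `f` columns are the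
rows `σ 0, …, σ f` of `M` and whose last column is `(M v) ∘ σ` is singular, its last column being
`∑ c, v c • (column c)`. Expanding its determinant along that last column gives, up to the global
sign `(-1)^f`, exactly the sum `∑ i ∈ I, ε_i (M v)_i`: deleting row `r` leaves the minor of `M` on
`I ∖ {σ r}`, and `(-1)^(r + f) = (-1)^(f - r) = sgn(I ∖ {σ r} ⊂ I)`.
-/

open Matrix

/-- The coefficient of `e*_{I∖J}` (for `J = I.erase i`) in the Buchsbaum–Rim map
`ε(e*_I ⊗ b) = Σ_{J ⊂ I, |J| = f} sgn(J ⊂ I) det(φ_J) e*_{I∖J}`: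
the sign `sgn(J ⊂ I) = (-1)^(f + 1 - k)` (where `i` is the `k`-th smallest element
of `I`) times the `f × f` minor of `M` on the rows indexed by `J = I ∖ {i}`. -/
noncomputable def epsCoeff {R : Type*} [CommRing R] {f g : ℕ}
    (M : Matrix (Fin g) (Fin f) R) (I : Finset (Fin g)) (hI : I.card = f + 1)
    (i : Fin g) (hi : i ∈ I) : R :=
  (-1 : R) ^ (f - (I.filter fun j => j < i).card) *
    (M.submatrix
      (fun r : Fin f =>
        ((I.erase i).orderIsoOfFin
          (by rw [Finset.card_erase_of_mem hi, hI]; rfl) r : Fin g))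
      id).det

namespace Finset

variable {α : Type*} [LinearOrder α]

theorem card_filter_lt_orderEmbOfFin (s : Finset α) {k : ℕ} (h : s.card = k) (r : Fin k) :
    (s.filter (· < s.orderEmbOfFin h r)).card = r := by
  have : s.filter (· < s.orderEmbOfFin h r) = (Iio r).map (s.orderEmbOfFin h).toEmbedding := by
    ext x
    simp only [mem_filter, mem_map, mem_Iio, RelEmbedding.coe_toEmbedding]
    constructor
    · rintro ⟨hx, hlt⟩
      obtain ⟨m, rfl⟩ : x ∈ Set.range (s.orderEmbOfFin h) := by
        rwa [range_orderEmbOfFin]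
      exact ⟨m, (s.orderEmbOfFin h).lt_iff_lt.1 hlt, rfl⟩
    · rintro ⟨m, hm, rfl⟩
      exact ⟨s.orderEmbOfFin_mem h m, (s.orderEmbOfFin h).lt_iff_lt.2 hm⟩
  rw [this, card_map, Fin.card_Iio]

theorem orderEmbOfFin_erase_apply (s : Finset α) {k : ℕ} (h : s.card = k + 1) (r : Fin (k + 1))
    (h' : (s.erase (s.orderEmbOfFin h r)).card = k) (a : Fin k) :
    (s.erase (s.orderEmbOfFin h r)).orderEmbOfFin h' a = s.orderEmbOfFin h (r.succAbove a) := by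
  refine congrFun (orderEmbOfFin_unique h' (fun b => ?_)
    ((s.orderEmbOfFin h).strictMono.comp (Fin.strictMono_succAbove r))).symm a
  exact mem_erase.2 ⟨fun hb => Fin.succAbove_ne r b ((s.orderEmbOfFin h).injective hb),
    s.orderEmbOfFin_mem h _⟩

end Finset

namespace Matrix

variable {R : Type*} [CommRing R] {n : ℕ}

theorem det_of_snoc_mulVec_eq_zero (A : Matrix (Fin (n + 1)) (Fin n) R) (v : Fin n → R) :
    (of fun r => Fin.snoc (A r) ((A *ᵥ v) r)).det = 0 := by
  set N : Matrix (Fin (n + 1)) (Fin (n + 1)) R := of fun r => Fin.snoc (A r) ((A *ᵥ v) r)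
  have hN : N = N.updateCol (Fin.last n)
      fun r => ∑ c, (Fin.snoc v 0 : Fin (n + 1) → R) c • N r c := by
    ext r c
    induction c using Fin.lastCases with
    | last => simp [N, Fin.sum_univ_castSucc, mulVec, dotProduct, mul_comm]
    | cast c => simp [(Fin.castSucc_lt_last c).ne]
  rw [hN, det_updateCol_sum]
  simp

theorem sum_neg_one_pow_mul_det_submatrix_succAbove_mul_mulVec
    (A : Matrix (Fin (n + 1)) (Fin n) R) (v : Fin n → R) :
    ∑ r : Fin (n + 1),
      (-1) ^ (r : ℕ) * (A.submatrix r.succAbove id).det * (A *ᵥ v) r = 0 := by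
  have h := det_of_snoc_mulVec_eq_zero A v
  rw [det_succ_column _ (Fin.last n)] at h
  rw [← neg_one_pow_mul_eq_zero_iff (n := n), Finset.mul_sum, ← h]
  refine Finset.sum_congr rfl fun r _ => ?_
  have hminor : (of fun r => Fin.snoc (A r) ((A *ᵥ v) r)).submatrix r.succAbove
      (Fin.last n).succAbove = A.submatrix r.succAbove id := by
    ext; simp
  rw [hminor, of_apply, Fin.snoc_last, Fin.val_last, pow_add]
  ring

end Matrix

theorem epsCoeff_orderEmbOfFin {R : Type*} [CommRing R] {f g : ℕ}
    (M : Matrix (Fin g) (Fin f) R) (I : Finset (Fin g)) (hI : I.card = f + 1)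
    (r : Fin (f + 1)) :
    epsCoeff M I hI (I.orderEmbOfFin hI r) (I.orderEmbOfFin_mem hI r) =
      (-1) ^ (f + r : ℕ) *
        ((M.submatrix (I.orderEmbOfFin hI) id).submatrix r.succAbove id).det := by
  have hsign : (-1 : R) ^ (f - r : ℕ) = (-1) ^ (f + r : ℕ) := by
    rw [show f + (r : ℕ) = (f - r) + 2 * r by omega, pow_add, pow_mul]
    simp
  rw [epsCoeff, Finset.card_filter_lt_orderEmbOfFin, hsign, submatrix_submatrix]
  congr 3
  ext a
  simp [Finset.orderEmbOfFin_erase_apply]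

theorem stmt13_general (R : Type*) [CommRing R] (f g : ℕ)
    (M : Matrix (Fin g) (Fin f) R)
    (I : Finset (Fin g)) (hI : I.card = f + 1) (v : Fin f → R) :
    ∑ i ∈ I.attach, epsCoeff M I hI i.1 i.2 * M.mulVec v i.1 = 0 := by
  have hminors := sum_neg_one_pow_mul_det_submatrix_succAbove_mul_mulVec
    (M.submatrix (I.orderEmbOfFin hI) id) v
  rw [← neg_one_pow_mul_eq_zero_iff (n := f), Finset.mul_sum] at hminors
  rw [← Finset.univ_eq_attach, ← (I.orderIsoOfFin hI).toEquiv.sum_comp, ← hminors]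
  refine Finset.sum_congr rfl fun r _ => ?_
  simp only [RelIso.coe_fn_toEquiv, Finset.coe_orderIsoOfFin_apply, epsCoeff_orderEmbOfFin]
  have hrow : (M.submatrix (I.orderEmbOfFin hI) id *ᵥ v) r = (M *ᵥ v) (I.orderEmbOfFin hI r) :=
    rfl
  rw [hrow, pow_add]
  ring

/-- The composition `φ* ∘ ε = 0`: for every basis element `e*_I ⊗ b` of
`∧^{f+1}G* ⊗ ∧^f F`, the functional `ε(e*_I ⊗ b)` vanishes on the image of `φ`,
where `φ` is given by the matrix `M`. -/
theorem stmt13 (R : Type*) [CommRing R] (f g : ℕ) (hfg : f < g)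
    (M : Matrix (Fin g) (Fin f) R)
    (I : Finset (Fin g)) (hI : I.card = f + 1) (v : Fin f → R) :
    ∑ i ∈ I.attach, epsCoeff M I hI i.1 i.2 * M.mulVec v i.1 = 0 :=
  stmt13_general R f g M I hI v
end

section
/- Let (R, m, k) be a Noetherian local ring and ψ : K → L a homomorphism of finitely generated R-modules with K free. Suppose M is a finitely generated R-module with m an associated prime of M, and suppose ψ ⊗ id_M : K ⊗ M → L ⊗ M is injective. Then ψ ⊗ id_k : K ⊗ k → L ⊗ k is injective; moreover if L is free, then ψ is injective and ψ(K) is a free direct summand of L. -/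
/-!
Since `𝔪` is an associated prime of `M`, the residue field `k = R/𝔪` embeds into `M`. Tensoring
this embedding with the flat module `K` keeps it injective, so `ψ ⊗ id_k` embeds into `ψ ⊗ id_M`
and is injective. When `L` is free, injectivity of `ψ ⊗ id_k` makes `ψ` a split injection
(Nakayama), which gives the remaining claims.
-/

section

open Function LinearMap

variable {R : Type*} [CommRing R]

theorem LinearMap.rTensor_injective_of_injective_of_rTensor_injective
    {K L M N : Type*} [AddCommGroup K] [Module R K] [AddCommGroup L] [Module R L]
    [AddCommGroup M] [Module R M] [AddCommGroup N] [Module R N] [Module.Flat R K]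
    (ψ : K →ₗ[R] L) {ι : N →ₗ[R] M} (hι : Injective ι) (hψ : Injective (ψ.rTensor M)) :
    Injective (ψ.rTensor N) := by
  have hsq : ι.lTensor L ∘ₗ ψ.rTensor N = ψ.rTensor M ∘ₗ ι.lTensor K := by
    rw [lTensor_comp_rTensor, rTensor_comp_lTensor]
  refine Injective.of_comp (f := ι.lTensor L) ?_
  rw [← coe_comp, hsq, coe_comp]
  exact hψ.comp (Module.Flat.lTensor_preserves_injective_linearMap ι hι)

theorem LinearMap.isCompl_range_ker_of_comp_eq_id {M N : Type*} [AddCommGroup M] [Module R M]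
    [AddCommGroup N] [Module R N] {f : M →ₗ[R] N} {g : N →ₗ[R] M} (h : g ∘ₗ f = id) :
    IsCompl (range f) (ker g) := by
  have hgf : ∀ x, g (f x) = x := LinearMap.congr_fun h
  constructor
  · rw [Submodule.disjoint_def]
    rintro _ ⟨x, rfl⟩ hx
    rw [mem_ker, hgf] at hx
    simp [hx]
  · rw [codisjoint_iff, eq_top_iff]
    intro y _
    exact Submodule.mem_sup.2 ⟨f (g y), mem_range_self f _, y - f (g y), by simp [hgf], by abel⟩

end

theorem stmt16_general (R : Type*) [CommRing R] [IsNoetherianRing R] [IsLocalRing R]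
    (K L M : Type*) [AddCommGroup K] [Module R K] [AddCommGroup L] [Module R L]
    [AddCommGroup M] [Module R M]
    [Module.Finite R K] [Module.Free R K] [Module.Finite R L]
    (ψ : K →ₗ[R] L)
    (hM : IsAssociatedPrime (IsLocalRing.maximalIdeal R) M)
    (hinj : Function.Injective (LinearMap.rTensor M ψ)) :
    Function.Injective (LinearMap.rTensor (IsLocalRing.ResidueField R) ψ) ∧
    (Module.Free R L →
      Function.Injective ψ ∧ Module.Free R (LinearMap.range ψ) ∧
        ∃ C : Submodule R L, IsCompl (LinearMap.range ψ) C) := by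
  obtain ⟨-, ι, hι⟩ := (isAssociatedPrime_iff_exists_injective_linearMap _ M).1 hM
  have hk : Function.Injective (ψ.rTensor (IsLocalRing.ResidueField R)) :=
    ψ.rTensor_injective_of_injective_of_rTensor_injective hι hinj
  refine ⟨hk, fun _ ↦ ?_⟩
  obtain ⟨l, hl⟩ := (IsLocalRing.split_injective_iff_lTensor_residueField_injective ψ).2
    ((LinearMap.lTensor_inj_iff_rTensor_inj _ _).2 hk)
  have hψ : Function.Injective ψ := Function.HasLeftInverse.injective ⟨l, LinearMap.congr_fun hl⟩
  exact ⟨hψ, .of_equiv (LinearEquiv.ofInjective ψ hψ), _, ψ.isCompl_range_ker_of_comp_eq_id hl⟩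

/-- Lemma of Buchsbaum–Eisenbud / Bruns–Herzog (1.3.4): over a Noetherian local
ring `(R, m, k)`, if `ψ : K → L` with `K` free and `m` an associated prime of `M`,
and `ψ ⊗ id_M` is injective, then `ψ ⊗ id_k` is injective; moreover if `L` is
free then `ψ` is injective and `ψ(K)` is a free direct summand of `L`. -/
theorem stmt16 (R : Type*) [CommRing R] [IsNoetherianRing R] [IsLocalRing R]
    (K L M : Type*) [AddCommGroup K] [Module R K] [AddCommGroup L] [Module R L]
    [AddCommGroup M] [Module R M]
    [Module.Finite R K] [Module.Free R K] [Module.Finite R L] [Module.Finite R M]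
    (ψ : K →ₗ[R] L)
    (hM : IsAssociatedPrime (IsLocalRing.maximalIdeal R) M)
    (hinj : Function.Injective (LinearMap.rTensor M ψ)) :
    Function.Injective (LinearMap.rTensor (IsLocalRing.ResidueField R) ψ) ∧
    (Module.Free R L →
      Function.Injective ψ ∧ Module.Free R (LinearMap.range ψ) ∧
        ∃ C : Submodule R L, IsCompl (LinearMap.range ψ) C) :=
  stmt16_general R K L M ψ hM hinj
end

section
/- Let R be a Noetherian commutative ring, let F = (F_i, φ_i) be a finite free resolution of a finitely generated R-module M, and suppose M is torsion free. Then for every non-zerodivisor r ∈ R, the complex F/rF is a free resolution of M/rM over R/(r). -/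
/-!
A cycle of `F/rF` in degree `i` lifts to some `y` with `φᵢ y = r z`. If `im φᵢ` is `r`-saturated
then `z = φᵢ w`, so `y - r w` is a cycle of `F`, hence a boundary, and its reduction is `y mod r`.
For `i = 0` saturation of `im φ₀` is torsion-freeness of `M`; for `i ≥ 1` it holds because
`im φᵢ = ker φᵢ₋₁` is a kernel of a map between free modules, on which `r` acts injectively.
-/

namespace Ideal.Quotient

variable {R : Type*} [CommRing R] {ι : Type*} (r : R)

theorem mk_span_singleton_comp_eq_zero_iff {v : ι → R} :
    mk (span {r}) ∘ v = 0 ↔ ∃ z : ι → R, v = r • z := by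
  simp only [funext_iff, Function.comp_apply, Pi.zero_apply, eq_zero_iff_mem,
    mem_span_singleton', Pi.smul_apply, smul_eq_mul]
  refine ⟨fun h => ?_, fun ⟨z, hz⟩ i => ⟨z i, by rw [hz, mul_comm]⟩⟩
  choose z hz using h
  exact ⟨z, fun i => by rw [← hz, mul_comm]⟩

theorem mk_span_singleton_comp_sub_smul (v w : ι → R) :
    mk (span {r}) ∘ (v - r • w) = mk (span {r}) ∘ v :=
  funext fun i => by simp

end Ideal.Quotient

namespace Matrix

theorem map_mulVec_comp {R S l m : Type*} [NonAssocSemiring R] [NonAssocSemiring S] [Fintype m]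
    (f : R →+* S) (A : Matrix l m R) (v : m → R) :
    A.map f *ᵥ (f ∘ v) = f ∘ (A *ᵥ v) :=
  funext fun i => (RingHom.map_mulVec f A v i).symm

variable {R : Type*} [CommRing R] {l m n : Type*} [Fintype m] [Fintype n]

theorem mulVec_mulVec_eq_zero_of_range_le_ker {A : Matrix l m R} {B : Matrix m n R}
    (hAB : LinearMap.range B.mulVecLin ≤ LinearMap.ker A.mulVecLin) (x : n → R) :
    A *ᵥ (B *ᵥ x) = 0 :=
  hAB ⟨x, rfl⟩

theorem mem_range_of_smul_mem_range {A : Matrix l m R} {B : Matrix m n R}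
    (hAB : LinearMap.ker A.mulVecLin = LinearMap.range B.mulVecLin) {r : R}
    (hr : ∀ x : R, r * x = 0 → x = 0) {z : m → R}
    (hz : r • z ∈ LinearMap.range B.mulVecLin) : z ∈ LinearMap.range B.mulVecLin := by
  rw [← hAB] at hz ⊢
  have hrAz : r • (A *ᵥ z) = 0 := by rw [← mulVec_smul]; exact hz
  exact funext fun i => hr _ (congrFun hrAz i)

open Ideal.Quotient in
theorem ker_map_mk_eq_range_map_mk {A : Matrix l m R} {B : Matrix m n R}
    (hAB : LinearMap.ker A.mulVecLin = LinearMap.range B.mulVecLin) {r : R}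
    (hsat : ∀ z : l → R, r • z ∈ LinearMap.range A.mulVecLin → z ∈ LinearMap.range A.mulVecLin) :
    LinearMap.ker (A.map (mk (Ideal.span {r}))).mulVecLin =
      LinearMap.range (B.map (mk (Ideal.span {r}))).mulVecLin := by
  set π := mk (Ideal.span {r})
  apply le_antisymm
  · intro yr hy
    obtain ⟨y, rfl⟩ := mk_surjective.comp_left yr
    have hAy : π ∘ (A *ᵥ y) = 0 := by rw [← map_mulVec_comp]; exact hy
    obtain ⟨z, hz⟩ := (mk_span_singleton_comp_eq_zero_iff r).1 hAy
    obtain ⟨w, hw⟩ := hsat z ⟨y, hz⟩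
    have hcycle : y - r • w ∈ LinearMap.ker A.mulVecLin := by
      change A *ᵥ (y - r • w) = 0
      rw [mulVec_sub, mulVec_smul, hz, ← hw]
      exact sub_self _
    rw [hAB] at hcycle
    obtain ⟨x, hx⟩ := hcycle
    refine ⟨π ∘ x, ?_⟩
    change B.map π *ᵥ (π ∘ x) = π ∘ y
    rw [map_mulVec_comp, ← mk_span_singleton_comp_sub_smul r y w]
    exact congrArg (π ∘ ·) hx
  · rintro _ ⟨xr, rfl⟩
    obtain ⟨x, rfl⟩ := mk_surjective.comp_left xr
    change A.map π *ᵥ (B.map π *ᵥ (π ∘ x)) = 0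
    rw [map_mulVec_comp, map_mulVec_comp, mulVec_mulVec_eq_zero_of_range_le_ker hAB.ge]
    exact funext fun _ => map_zero π

end Matrix

open Matrix

theorem stmt18_general (R : Type*) [CommRing R]
    (b : ℕ → ℕ)
    (A : ∀ i : ℕ, Matrix (Fin (b i)) (Fin (b (i + 1))) R)
    (hexact : ∀ i : ℕ,
      LinearMap.ker (A i).mulVecLin = LinearMap.range (A (i + 1)).mulVecLin)
    (htf : ∀ r : R, (∀ x : R, r * x = 0 → x = 0) →
      ∀ y : Fin (b 0) → R, r • y ∈ LinearMap.range (A 0).mulVecLin →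
        y ∈ LinearMap.range (A 0).mulVecLin)
    (r : R) (hr : ∀ x : R, r * x = 0 → x = 0) :
    ∀ i : ℕ,
      LinearMap.ker ((A i).map (Ideal.Quotient.mk (Ideal.span {r}))).mulVecLin =
        LinearMap.range
          ((A (i + 1)).map (Ideal.Quotient.mk (Ideal.span {r}))).mulVecLin := by
  have hsat : ∀ i (z : Fin (b i) → R),
      r • z ∈ LinearMap.range (A i).mulVecLin → z ∈ LinearMap.range (A i).mulVecLin
    | 0 => htf r hr
    | i + 1 => fun _ => mem_range_of_smul_mem_range (hexact i) hr
  exact fun i => ker_map_mk_eq_range_map_mk (hexact i) (hsat i)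

/-- Let `F` be a finite free resolution of `M = coker φ₁`, where
`φ_{i+1} : F_{i+1} → F_i` is given by the matrix `A i` and `rank F_i = b i`
vanishes for `i > n`, and suppose `M` is torsion free. Then for every
non-zerodivisor `r ∈ R`, the reduced complex `F/rF` (whose differentials are the
matrices `A i` with entries reduced mod `(r)`) is a free resolution of `M/rM`
over `R/(r)`: it is exact at every positive homological degree (its zeroth
homology is `M/rM` by right exactness of base change). -/
theorem stmt18 (R : Type*) [CommRing R] [IsNoetherianRing R]
    (n : ℕ) (b : ℕ → ℕ) (hb : ∀ i, n < i → b i = 0)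
    (A : ∀ i : ℕ, Matrix (Fin (b i)) (Fin (b (i + 1))) R)
    (hexact : ∀ i : ℕ,
      LinearMap.ker (A i).mulVecLin = LinearMap.range (A (i + 1)).mulVecLin)
    (htf : ∀ r : R, (∀ x : R, r * x = 0 → x = 0) →
      ∀ y : Fin (b 0) → R, r • y ∈ LinearMap.range (A 0).mulVecLin →
        y ∈ LinearMap.range (A 0).mulVecLin)
    (r : R) (hr : ∀ x : R, r * x = 0 → x = 0) :
    ∀ i : ℕ,
      LinearMap.ker ((A i).map (Ideal.Quotient.mk (Ideal.span {r}))).mulVecLin =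
        LinearMap.range
          ((A (i + 1)).map (Ideal.Quotient.mk (Ideal.span {r}))).mulVecLin :=
  stmt18_general R b A hexact htf r hr
end
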